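/- arXiv:1802.09828 — 2 statements merged into one kernel-verified Lean document; each statement's English description precedes it below -/
import Mathlib

section
/- Fix ε with 0 < ε ≤ 1/100, a constant γ ≥ 10, and τ ≥ 1 types. The number of configurations C with fixed speed s(C)=s and fixed weight bound w(C)=w is at most τ·(2/ε)^{(2γ+1)²·log_{1+ε}(1/ε)}. -/
/-! A configuration is determined by its type, by `k = r / (ε w) < (1 + ε)³ / ε`, and by the
multiplicities `ℓ ν ≤ (1 + ε)³ / ε ^ γ` on the admissible exponents `ν`. Since
`ε ^ γ w ≤ (1 + ε) ^ ν ≤ (1 + ε)³ w`, there are at most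
`log_{1+ε}((1 + ε)³ / ε ^ γ) + 1 = γ log_{1+ε}(1/ε) + 4` of these. The choices for `k` and for each
`ℓ ν` are bounded by `(2 / ε)²` and `(2 / ε) ^ γ`, and the resulting exponent
`2 + γ (γ log_{1+ε}(1/ε) + 4)` is at most `(2γ + 1)² log_{1+ε}(1/ε)` because `log_{1+ε}(1/ε) ≥ 1`. -/

open Finset Real

lemma mem_Icc_ceil_logb_floor_logb {x a b : ℝ} (hx : 1 < x) (ha : 0 < a) {ν : ℤ}
    (hlo : a ≤ x ^ ν) (hhi : x ^ ν ≤ b) : ν ∈ Icc ⌈logb x a⌉ ⌊logb x b⌋ := by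
  rw [mem_Icc, Int.ceil_le, Int.le_floor, logb_le_iff_le_rpow hx ha,
    le_logb_iff_rpow_le hx (ha.trans_le (hlo.trans hhi)), rpow_intCast]
  exact ⟨hlo, hhi⟩

lemma card_Icc_ceil_floor_le {a b : ℝ} (h : a ≤ b) : ((Icc ⌈a⌉ ⌊b⌋).card : ℝ) ≤ b - a + 1 := by
  rw [Int.card_Icc]
  rcases le_or_gt 0 (⌊b⌋ + 1 - ⌈a⌉) with hnn | hneg
  · rw [← Int.cast_natCast, Int.toNat_of_nonneg hnn]
    push_cast
    linarith [Int.floor_le b, Int.le_ceil a]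
  · rw [Int.toNat_of_nonpos hneg.le]
    push_cast
    linarith

lemma mem_finsupp_of_sum_zpow_mul_le {x m W : ℝ} (hx : 1 < x) (hm : 0 < m) {f : ℤ →₀ ℕ}
    (hsupp : ∀ ν ∈ f.support, m ≤ x ^ ν) (hsum : ∑ ν ∈ f.support, x ^ ν * (f ν : ℝ) ≤ W) :
    f ∈ (Icc ⌈logb x m⌉ ⌊logb x W⌋).finsupp fun _ => range (⌊W / m⌋₊ + 1) := by
  have hterm : ∀ ν ∈ f.support, x ^ ν * (f ν : ℝ) ≤ W := fun ν hν =>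
    (single_le_sum (f := fun i => x ^ i * (f i : ℝ))
      (fun i _ => by positivity) hν).trans hsum
  have hone : ∀ ν ∈ f.support, (1 : ℝ) ≤ f ν := fun ν hν => by
    exact_mod_cast Nat.one_le_iff_ne_zero.mpr (Finsupp.mem_support_iff.mp hν)
  rw [mem_finsupp_iff]
  refine ⟨fun ν hν => mem_Icc_ceil_logb_floor_logb hx hm (hsupp ν hν) ?_, fun ν _ => ?_⟩
  · nlinarith [hterm ν hν, hone ν hν, zpow_pos (zero_lt_one.trans hx) ν]
  · rw [mem_range, Nat.lt_succ_iff]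
    by_cases hν : ν ∈ f.support
    · refine Nat.le_floor ((le_div_iff₀ hm).mpr ?_)
      nlinarith [hterm ν hν, hsupp ν hν, (f ν).cast_nonneg (α := ℝ)]
    · simp [Finsupp.notMem_support_iff.mp hν]

def configSet (τ : ℕ) (x c m W : ℝ) : Set (Fin τ × ℕ × (ℤ →₀ ℕ)) :=
  {p | (p.2.1 : ℝ) * c < W ∧ (∀ ν ∈ p.2.2.support, m ≤ x ^ ν) ∧
    (p.2.1 : ℝ) * c + ∑ ν ∈ p.2.2.support, x ^ ν * (p.2.2 ν : ℝ) ≤ W}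

lemma ncard_configSet_le {τ : ℕ} {x c m W : ℝ} (hx : 1 < x) (hc : 0 < c) (hm : 0 < m) :
    (configSet τ x c m W).ncard ≤
      τ * (⌈W / c⌉₊ * (⌊W / m⌋₊ + 1) ^ (Icc ⌈logb x m⌉ ⌊logb x W⌋).card) := by
  classical
  have hsub : configSet τ x c m W ⊆ ↑((univ : Finset (Fin τ)) ×ˢ (range ⌈W / c⌉₊ ×ˢ
      (Icc ⌈logb x m⌉ ⌊logb x W⌋).finsupp fun _ => range (⌊W / m⌋₊ + 1))) := by
    rintro ⟨t, k, f⟩ ⟨hk, hsupp, hsum⟩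
    simp only [coe_product, Set.mem_prod, mem_coe, mem_univ, mem_range, true_and]
    refine ⟨Nat.lt_ceil.mpr ((lt_div_iff₀ hc).mpr hk),
      mem_finsupp_of_sum_zpow_mul_le hx hm hsupp ?_⟩
    have : (0 : ℝ) ≤ k * c := by positivity
    linarith
  refine (Set.ncard_le_ncard hsub (finite_toSet _)).trans_eq ?_
  rw [Set.ncard_coe_finset, card_product, card_product, card_univ, Fintype.card_fin,
    card_finsupp, prod_const, card_range, card_range]

section SmallEps

variable {ε : ℝ} (hε : 0 < ε) (hε1 : ε ≤ 1 / 100)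
include hε hε1

lemma one_add_pow_three_le_two : (1 + ε) ^ 3 ≤ 2 :=
  calc (1 + ε) ^ 3 ≤ (1 + 1 / 100) ^ 3 := by gcongr
    _ ≤ 2 := by norm_num

lemma natCeil_one_add_pow_three_div_le : (⌈(1 + ε) ^ 3 / ε⌉₊ : ℝ) ≤ (2 / ε) ^ (2 : ℝ) := by
  have hceil := Nat.ceil_lt_add_one (show 0 ≤ (1 + ε) ^ 3 / ε by positivity)
  have hdiv : (1 + ε) ^ 3 / ε ≤ 2 / ε := by gcongr; exact one_add_pow_three_le_two hε hε1
  have hsq : 2 / ε + 1 ≤ (2 / ε) ^ 2 := by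
    rw [div_pow, div_add_one hε.ne', div_le_div_iff₀ hε (by positivity)]
    nlinarith
  rw [rpow_two]
  linarith

lemma natFloor_one_add_pow_three_div_rpow_add_one_le {γ : ℝ} (hγ : 2 ≤ γ) :
    (⌊(1 + ε) ^ 3 / ε ^ γ⌋₊ + 1 : ℝ) ≤ (2 / ε) ^ γ := by
  have hεγ : 0 < ε ^ γ := rpow_pos_of_pos hε γ
  have hεγ1 : ε ^ γ ≤ 1 := rpow_le_one hε.le (by linarith) (by linarith)
  have hfloor : (⌊(1 + ε) ^ 3 / ε ^ γ⌋₊ : ℝ) ≤ 2 / ε ^ γ :=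
    (Nat.floor_le (by positivity)).trans (by gcongr; exact one_add_pow_three_le_two hε hε1)
  have htwo : (4 : ℝ) ≤ 2 ^ γ := by
    calc (4 : ℝ) = 2 ^ (2 : ℝ) := by norm_num
      _ ≤ 2 ^ γ := rpow_le_rpow_of_exponent_le (by norm_num) hγ
  rw [div_rpow (by norm_num) hε.le]
  have : 2 / ε ^ γ + 1 ≤ 2 ^ γ / ε ^ γ := by
    rw [div_add_one hεγ.ne']
    gcongr
    linarith
  linarith

lemma one_le_logb_one_add_inv : 1 ≤ logb (1 + ε) (1 / ε) := by
  rw [le_logb_iff_rpow_le (by linarith) (by positivity), rpow_one, le_div_iff₀ hε]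
  nlinarith

end SmallEps

lemma logb_one_add_pow_three_div_rpow {ε : ℝ} (hε : 0 < ε) (γ : ℝ) :
    logb (1 + ε) ((1 + ε) ^ 3 / ε ^ γ) = 3 + γ * logb (1 + ε) (1 / ε) := by
  rw [logb_div (by positivity) (rpow_pos_of_pos hε γ).ne', logb_pow,
    logb_self_eq_one (by linarith), logb_rpow_eq_mul_logb_of_pos hε, one_div, logb_inv]
  ring

lemma mul_pow_le_rpow_two_add_mul {P B M γ : ℝ} (hP : 0 < P) (hB : B ≤ P ^ (2 : ℝ))
    (hM₀ : 0 ≤ M) (hM : M ≤ P ^ γ) (n : ℕ) : B * M ^ n ≤ P ^ (2 + γ * n) := by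
  rw [rpow_add hP, rpow_mul hP.le, rpow_natCast]
  exact mul_le_mul hB (by gcongr) (by positivity) (by positivity)

theorem stmt_6_general (ε γ w : ℝ) (τ : ℕ) (hε : 0 < ε) (hε1 : ε ≤ 1 / 100)
    (hγ : 10 ≤ γ) (hw : 0 < w) :
    (Set.ncard {c : Fin τ × ℕ × (ℤ →₀ ℕ) |
        (c.2.1 : ℝ) * (ε * w) < (1 + ε) ^ 3 * w ∧
        (∀ ν ∈ c.2.2.support, ε ^ γ * w ≤ (1 + ε) ^ ν) ∧
        (c.2.1 : ℝ) * (ε * w) + ∑ ν ∈ c.2.2.support, (1 + ε) ^ ν * (c.2.2 ν : ℝ)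
          ≤ (1 + ε) ^ 3 * w} : ℝ)
      ≤ τ * (2 / ε) ^ ((2 * γ + 1) ^ 2 * Real.logb (1 + ε) (1 / ε)) := by
  set L := logb (1 + ε) (1 / ε)
  set n := (Icc ⌈logb (1 + ε) (ε ^ γ * w)⌉ ⌊logb (1 + ε) ((1 + ε) ^ 3 * w)⌋).card
  have hεγ : 0 < ε ^ γ := rpow_pos_of_pos hε γ
  have hcount := ncard_configSet_le (τ := τ) (by linarith : 1 < 1 + ε) (mul_pos hε hw)
    (mul_pos hεγ hw) (W := (1 + ε) ^ 3 * w)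
  rw [mul_div_mul_right _ _ hw.ne', mul_div_mul_right _ _ hw.ne'] at hcount
  have hn : (n : ℝ) ≤ γ * L + 4 := by
    have hmW : ε ^ γ * w ≤ (1 + ε) ^ 3 * w := by
      gcongr
      exact (rpow_le_one (z := γ) hε.le (by linarith) (by linarith)).trans
        (one_le_pow₀ (by linarith))
    have := card_Icc_ceil_floor_le
      (logb_le_logb_of_le (b := 1 + ε) (by linarith) (by positivity) hmW)
    rw [← logb_div (by positivity) (by positivity), mul_div_mul_right _ _ hw.ne',
      logb_one_add_pow_three_div_rpow hε] at this
    exact this.trans_eq (by ring)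
  have hL := one_le_logb_one_add_inv hε hε1
  have hexp : 2 + γ * n ≤ (2 * γ + 1) ^ 2 * L := by
    nlinarith [mul_le_mul_of_nonneg_left hn (by linarith : 0 ≤ γ)]
  calc (Set.ncard (configSet τ (1 + ε) (ε * w) (ε ^ γ * w) ((1 + ε) ^ 3 * w)) : ℝ)
      ≤ τ * (⌈(1 + ε) ^ 3 / ε⌉₊ * (⌊(1 + ε) ^ 3 / ε ^ γ⌋₊ + 1 : ℝ) ^ n) := by
        exact_mod_cast hcount
    _ ≤ τ * (2 / ε) ^ (2 + γ * n) := by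
        gcongr
        exact mul_pow_le_rpow_two_add_mul (by positivity)
          (natCeil_one_add_pow_three_div_le hε hε1) (by positivity)
          (natFloor_one_add_pow_three_div_rpow_add_one_le hε hε1 (by linarith)) n
    _ ≤ τ * (2 / ε) ^ ((2 * γ + 1) ^ 2 * L) := by
        gcongr
        rw [le_div_iff₀ hε]; linarith

/-- A configuration with fixed speed `s` and weight bound `w` is modeled by its
remaining data: a type `t : Fin τ`, a natural number `k` with `r = k * (ε * w)`,
and a finitely supported function `ℓ : ℤ →₀ ℕ` counting large jobs of each size. -/
theorem stmt_6 (ε γ w : ℝ) (τ : ℕ) (hε : 0 < ε) (hε1 : ε ≤ 1 / 100)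
    (hγ : 10 ≤ γ) (hτ : 1 ≤ τ) (hw : 0 < w) :
    (Set.ncard {c : Fin τ × ℕ × (ℤ →₀ ℕ) |
        (c.2.1 : ℝ) * (ε * w) < (1 + ε) ^ 3 * w ∧
        (∀ ν ∈ c.2.2.support, ε ^ γ * w ≤ (1 + ε) ^ ν) ∧
        (c.2.1 : ℝ) * (ε * w) + ∑ ν ∈ c.2.2.support, (1 + ε) ^ ν * (c.2.2 ν : ℝ)
          ≤ (1 + ε) ^ 3 * w} : ℝ)
      ≤ τ * (2 / ε) ^ ((2 * γ + 1) ^ 2 * Real.logb (1 + ε) (1 / ε)) :=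
  stmt_6_general ε γ w τ hε hε1 hγ hw
end

section
/- Let jobs of sizes in {(1+ε)^ζ : ζ ∈ ℤ} with counts ñ(ζ) ∈ ℤ≥0, and bins (machines) each with a capacity value of the form r(C)+2ε·w(C), sorted so that bins are in non-increasing order of w(C) and jobs in non-decreasing order of size. If for every integer ζ: Σ_{ζ' ≥ ζ} ñ(ζ')·(1+ε)^{ζ'} ≤ Σ_{bins with ε^γ·w(C) > (1+ε)^ζ} (r(C)+2ε·w(C)), then the Next-Fit heuristic (closing each bin once its content exceeds r(C)+2εw(C)) packs all jobs, assigning each job of size (1+ε)^ζ only to bins with ε^γ·w(C) > (1+ε)^ζ. -/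
/-!
Lay the jobs end to end on the half-line, largest class first, and cut the half-line into
consecutive windows of lengths `r b + 2 ε w b`, one per bin in the given order; each job goes to
the bin whose window contains its left end. Since `w` is non-increasing, the bins that may take a
job of size `(1 + ε) ^ ζ` form an initial segment, and the capacity hypothesis at `ζ` says that
all jobs of size at least `(1 + ε) ^ ζ` end before the windows of that segment do; so every job
is placed, and only in a bin for which it is small. The jobs of one bin are disjoint intervals
starting in its window, so their total size is at most the window length plus one small job,
and a small job has size below `ε ^ γ w b ≤ ε w b`.
-/

open Finset MeasureTheory

section BinWindows

variable {M : ℕ} (cap : Fin M → ℝ)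

noncomputable def prefixCap (m : ℕ) : ℝ := ∑ b with b.val < m, cap b

def binWindow (b : Fin M) : Set ℝ := Set.Ico (prefixCap cap b) (prefixCap cap ((b : ℕ) + 1))

variable {cap}

lemma prefixCap_mono (h0 : ∀ b, 0 ≤ cap b) : Monotone (prefixCap cap) := fun _ _ hm =>
  sum_le_sum_of_subset_of_nonneg (fun b => by simp only [mem_filter, mem_univ, true_and]; omega)
    fun b _ _ => h0 b

@[simp]
lemma prefixCap_zero : prefixCap cap 0 = 0 := by simp [prefixCap]

lemma prefixCap_self : prefixCap cap M = ∑ b, cap b := by simp [prefixCap]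

lemma prefixCap_succ (b : Fin M) : prefixCap cap ((b : ℕ) + 1) = prefixCap cap b + cap b := by
  have : univ.filter (fun b' : Fin M => b'.val < b.val + 1)
      = insert b (univ.filter fun b' : Fin M => b'.val < b.val) := by
    ext b'; simp only [mem_filter, mem_univ, true_and, mem_insert, Fin.ext_iff]; omega
  rw [prefixCap, this, sum_insert (by simp), prefixCap, add_comm]

lemma existsUnique_mem_binWindow (h0 : ∀ b, 0 ≤ cap b) {x : ℝ}
    (hx : x ∈ Set.Ico 0 (prefixCap cap M)) : ∃! b, x ∈ binWindow cap b := by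
  rw [← prefixCap_zero (cap := cap)] at hx
  obtain ⟨i, hi, hxi⟩ := Set.mem_iUnion₂.1 (Ico_subset_biUnion_Ico M (prefixCap cap) hx)
  refine ⟨⟨i, mem_range.1 hi⟩, hxi, fun b hb => Fin.ext (by_contra fun hne => ?_)⟩
  exact Set.disjoint_left.1 ((prefixCap_mono h0).pairwise_disjoint_on_Ico_succ hne) hb hxi

lemma sum_filter_le_prefixCap (h0 : ∀ b, 0 ≤ cap b) {u : Fin M → ℝ} (hu : Antitone u) {t : ℝ}
    {b : Fin M} (hb : u b ≤ t) : ∑ b' with t < u b', cap b' ≤ prefixCap cap b :=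
  sum_le_sum_of_subset_of_nonneg
    (fun b' hb' => by
      simp only [mem_filter, mem_univ, true_and] at hb' ⊢
      by_contra! hle
      exact (hb'.trans_le (hu (Fin.le_def.2 hle))).not_ge hb)
    fun b' _ _ => h0 b'

end BinWindows

lemma sum_le_of_pairwiseDisjoint_Ico {ι : Type*} {J : Finset ι} {x l : ι → ℝ} {s t : ℝ}
    (hl : ∀ i ∈ J, 0 ≤ l i) (hd : (J : Set ι).PairwiseDisjoint fun i => Set.Ico (x i) (x i + l i))
    (hsub : ∀ i ∈ J, Set.Ico (x i) (x i + l i) ⊆ Set.Ico s t) (hst : s ≤ t) :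
    ∑ i ∈ J, l i ≤ t - s := by
  refine (ENNReal.ofReal_le_ofReal_iff (sub_nonneg.2 hst)).1 ?_
  calc ENNReal.ofReal (∑ i ∈ J, l i)
      = ∑ i ∈ J, volume (Set.Ico (x i) (x i + l i)) := by
        rw [ENNReal.ofReal_sum_of_nonneg hl]
        simp only [Real.volume_Ico, add_sub_cancel_left]
    _ = volume (⋃ i ∈ J, Set.Ico (x i) (x i + l i)) :=
        (measure_biUnion_finset hd fun _ _ => measurableSet_Ico).symm
    _ ≤ volume (Set.Ico s t) := measure_mono (Set.iUnion₂_subset hsub)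
    _ = ENNReal.ofReal (t - s) := Real.volume_Ico

section JobLayout

variable (size : ℤ → ℝ) (n : ℤ →₀ ℕ)

noncomputable def volumeAbove (ζ : ℤ) : ℝ := ∑ ζ' ∈ n.support with ζ < ζ', n ζ' * size ζ'

/-- The jobs are laid end to end on `[0, ∞)`, largest class first: the `k`-th job of class `ζ`
occupies `[jobStart size n ζ k, jobStart size n ζ k + size ζ)`. -/
noncomputable def jobStart (ζ : ℤ) (k : ℕ) : ℝ := volumeAbove size n ζ + k * size ζ

def jobs : Finset (Σ _ : ℤ, ℕ) := n.support.sigma fun ζ => range (n ζ)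

variable {size n}

lemma volumeAbove_add {ζ : ℤ} (hζ : ζ ∈ n.support) :
    volumeAbove size n ζ + n ζ * size ζ = ∑ ζ' ∈ n.support with ζ ≤ ζ', n ζ' * size ζ' := by
  have : {ζ' ∈ n.support | ζ ≤ ζ'} = insert ζ {ζ' ∈ n.support | ζ < ζ'} := by
    ext ζ'
    simp only [mem_filter, mem_insert]
    constructor
    · rintro ⟨h1, h2⟩
      exact h2.eq_or_lt.imp Eq.symm fun h => ⟨h1, h⟩
    · rintro (rfl | ⟨h1, h2⟩)
      exacts [⟨hζ, le_rfl⟩, ⟨h1, h2.le⟩]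
  rw [this, sum_insert (by simp), volumeAbove, add_comm]

lemma jobStart_nonneg (hsize : ∀ ζ, 0 < size ζ) (ζ : ℤ) (k : ℕ) : 0 ≤ jobStart size n ζ k :=
  add_nonneg (sum_nonneg fun ζ' _ => mul_nonneg (Nat.cast_nonneg _) (hsize ζ').le)
    (mul_nonneg (Nat.cast_nonneg _) (hsize ζ).le)

lemma jobStart_add_le_volumeAbove_add (hsize : ∀ ζ, 0 < size ζ) {ζ : ℤ} {k : ℕ} (hk : k < n ζ) :
    jobStart size n ζ k + size ζ ≤ volumeAbove size n ζ + n ζ * size ζ := by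
  have : (k : ℝ) + 1 ≤ n ζ := by exact_mod_cast hk
  unfold jobStart
  nlinarith [hsize ζ]

lemma jobStart_add_le_sum (hsize : ∀ ζ, 0 < size ζ) {ζ : ℤ} {k : ℕ} (hk : k < n ζ) :
    jobStart size n ζ k + size ζ ≤ ∑ ζ' ∈ n.support with ζ ≤ ζ', n ζ' * size ζ' := by
  rw [← volumeAbove_add (Finsupp.mem_support_iff.2 (by omega))]
  exact jobStart_add_le_volumeAbove_add hsize hk

lemma jobStart_add_le_jobStart_of_lt (hsize : ∀ ζ, 0 < size ζ) {ζ : ℤ} {k k' : ℕ} (h : k < k') :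
    jobStart size n ζ k + size ζ ≤ jobStart size n ζ k' := by
  have : (k : ℝ) + 1 ≤ k' := by exact_mod_cast h
  unfold jobStart
  nlinarith [hsize ζ]

lemma jobStart_add_le_jobStart_of_class_lt (hsize : ∀ ζ, 0 < size ζ) {ζ ζ' : ℤ} {k k' : ℕ}
    (hk' : k' < n ζ') (h : ζ < ζ') : jobStart size n ζ' k' + size ζ' ≤ jobStart size n ζ k := by
  have hζ' : ζ' ∈ n.support := Finsupp.mem_support_iff.2 (by omega)
  have hle : volumeAbove size n ζ' + n ζ' * size ζ' ≤ volumeAbove size n ζ := by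
    rw [volumeAbove_add hζ']
    refine sum_le_sum_of_subset_of_nonneg (fun z hz => ?_) fun z _ _ => ?_
    · simp only [mem_filter] at hz ⊢
      exact ⟨hz.1, h.trans_le hz.2⟩
    · exact mul_nonneg (Nat.cast_nonneg _) (hsize z).le
  have := jobStart_add_le_volumeAbove_add hsize hk'
  have : 0 ≤ (k : ℝ) * size ζ := mul_nonneg (Nat.cast_nonneg _) (hsize ζ).le
  unfold jobStart at *
  linarith

lemma pairwiseDisjoint_jobs (hsize : ∀ ζ, 0 < size ζ) :
    (jobs n : Set (Σ _ : ℤ, ℕ)).PairwiseDisjoint fun p =>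
      Set.Ico (jobStart size n p.1 p.2) (jobStart size n p.1 p.2 + size p.1) := by
  have disjoint_of_le {a₁ a₂ b₁ b₂ : ℝ} (h : b₂ ≤ a₁ ∨ a₂ ≤ b₁) :
      Disjoint (Set.Ico a₁ a₂) (Set.Ico b₁ b₂) :=
    Set.Ico_disjoint_Ico.2 <| h.elim (fun h => (min_le_right _ _).trans (h.trans (le_max_left _ _)))
      fun h => (min_le_left _ _).trans (h.trans (le_max_right _ _))
  rintro ⟨ζ, k⟩ hp ⟨ζ', k'⟩ hq hne
  simp only [jobs, coe_sigma, Set.mem_sigma_iff, mem_coe, mem_range] at hp hq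
  refine disjoint_of_le ?_
  rcases lt_trichotomy ζ ζ' with h | rfl | h
  · exact .inl (jobStart_add_le_jobStart_of_class_lt hsize hq.2 h)
  · rcases lt_trichotomy k k' with h | rfl | h
    · exact .inr (jobStart_add_le_jobStart_of_lt hsize h)
    · exact absurd rfl hne
    · exact .inl (jobStart_add_le_jobStart_of_lt hsize h)
  · exact .inr (jobStart_add_le_jobStart_of_class_lt hsize hp.2 h)

end JobLayout

section NextFit

variable {M : ℕ} (cap : Fin M → ℝ) (size : ℤ → ℝ) (n : ℤ →₀ ℕ)

open Classical in
/-- Each job goes to the bin whose window contains its start; overflow of a bin is thereby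
charged to the next one. -/
noncomputable def nextFitCount (ζ : ℤ) (b : Fin M) : ℕ :=
  #{k ∈ range (n ζ) | jobStart size n ζ k ∈ binWindow cap b}

variable {cap size n}

lemma sum_nextFitCount (h0 : ∀ b, 0 ≤ cap b) (hsize : ∀ ζ, 0 < size ζ) {u : Fin M → ℝ}
    (hfit : ∀ ζ, ∀ k < n ζ, jobStart size n ζ k + size ζ ≤ ∑ b with size ζ < u b, cap b)
    (ζ : ℤ) : ∑ b, nextFitCount cap size n ζ b = n ζ := by
  classical
  have hunique (k : ℕ) (hk : k < n ζ) : ∃! b, jobStart size n ζ k ∈ binWindow cap b := by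
    refine existsUnique_mem_binWindow h0 ⟨jobStart_nonneg hsize ζ k, ?_⟩
    calc jobStart size n ζ k < jobStart size n ζ k + size ζ := lt_add_of_pos_right _ (hsize ζ)
      _ ≤ ∑ b with size ζ < u b, cap b := hfit ζ k hk
      _ ≤ prefixCap cap M :=
        prefixCap_self (cap := cap) ▸ sum_le_sum_of_subset_of_nonneg (filter_subset _ _)
          fun b _ _ => h0 b
  calc ∑ b, nextFitCount cap size n ζ b
      = ∑ k ∈ range (n ζ), #{b | jobStart size n ζ k ∈ binWindow cap b} :=
        (sum_card_bipartiteAbove_eq_sum_card_bipartiteBelow _).symm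
    _ = ∑ k ∈ range (n ζ), 1 := sum_congr rfl fun k hk => by
        obtain ⟨b, hb, hb'⟩ := hunique k (mem_range.1 hk)
        exact card_eq_one.2 ⟨b, by ext; simpa using ⟨hb' _, fun h => h ▸ hb⟩⟩
    _ = n ζ := by simp

lemma lt_of_nextFitCount_ne_zero (h0 : ∀ b, 0 ≤ cap b) (hsize : ∀ ζ, 0 < size ζ)
    {u : Fin M → ℝ} (hu : Antitone u)
    (hfit : ∀ ζ, ∀ k < n ζ, jobStart size n ζ k + size ζ ≤ ∑ b with size ζ < u b, cap b)
    {ζ : ℤ} {b : Fin M} (h : nextFitCount cap size n ζ b ≠ 0) : size ζ < u b := by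
  classical
  obtain ⟨k, hk⟩ := card_ne_zero.1 h
  rw [mem_filter, mem_range] at hk
  by_contra! hub
  linarith [sum_filter_le_prefixCap h0 hu hub, hfit ζ k hk.1, hk.2.1, hsize ζ]

lemma sum_mul_nextFitCount_le (h0 : ∀ b, 0 ≤ cap b) (hsize : ∀ ζ, 0 < size ζ)
    {slack : Fin M → ℝ} {b : Fin M} (hslack0 : 0 ≤ slack b)
    (hslack : ∀ ζ, nextFitCount cap size n ζ b ≠ 0 → size ζ ≤ slack b) :
    ∑ ζ ∈ n.support, size ζ * nextFitCount cap size n ζ b ≤ cap b + slack b := by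
  classical
  set J := n.support.sigma fun ζ => {k ∈ range (n ζ) | jobStart size n ζ k ∈ binWindow cap b}
  have hJ : J ⊆ jobs n := sigma_mono subset_rfl fun ζ => filter_subset _ _
  have hsub (p) (hp : p ∈ J) :
      Set.Ico (jobStart size n p.1 p.2) (jobStart size n p.1 p.2 + size p.1)
        ⊆ Set.Ico (prefixCap cap b) (prefixCap cap ((b : ℕ) + 1) + slack b) := by
    simp only [J, mem_sigma, mem_filter, mem_range] at hp
    have := hslack p.1 (card_ne_zero_of_mem (mem_filter.2 ⟨mem_range.2 hp.2.1, hp.2.2⟩))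
    exact Set.Ico_subset_Ico hp.2.2.1 (by linarith [hp.2.2.2])
  calc ∑ ζ ∈ n.support, size ζ * nextFitCount cap size n ζ b
      = ∑ p ∈ J, size p.1 := by
        simp only [J, sum_sigma, sum_const, nsmul_eq_mul, nextFitCount, mul_comm]
    _ ≤ prefixCap cap ((b : ℕ) + 1) + slack b - prefixCap cap b :=
        sum_le_of_pairwiseDisjoint_Ico (fun p _ => (hsize p.1).le)
          ((pairwiseDisjoint_jobs hsize).subset (mod_cast hJ)) hsub
          (by linarith [prefixCap_succ (cap := cap) b, h0 b])
    _ = cap b + slack b := by rw [prefixCap_succ]; ring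

end NextFit

theorem stmt_15 (ε γ : ℝ) (hε : 0 < ε) (hε1 : ε ≤ 1 / 100) (hγ : 10 ≤ γ)
    (M : ℕ) (w r : Fin M → ℝ) (hw : ∀ b, 0 ≤ w b) (hr : ∀ b, 0 ≤ r b)
    (hsorted : Antitone w)  -- bins sorted in non-increasing order of weight
    (ntil : ℤ →₀ ℕ)  -- job counts: `ntil ζ` jobs of size `(1+ε)^ζ`
    (hcap : ∀ ζ : ℤ,
      ∑ ζ' ∈ ntil.support.filter (fun ζ' => ζ ≤ ζ'), (ntil ζ' : ℝ) * (1 + ε) ^ ζ'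
        ≤ ∑ b ∈ Finset.univ.filter (fun b => (1 + ε) ^ ζ < ε ^ γ * w b),
            (r b + 2 * ε * w b)) :
    ∃ a : ℤ → Fin M → ℕ,
      -- all jobs are packed
      (∀ ζ : ℤ, ∑ b, a ζ b = ntil ζ) ∧
      -- each job of size (1+ε)^ζ goes only to bins for which it is small
      (∀ ζ : ℤ, ∀ b, a ζ b ≠ 0 → (1 + ε) ^ ζ < ε ^ γ * w b) ∧
      -- each bin's content exceeds its capacity value by less than one small item
      (∀ b, ∑ ζ ∈ ntil.support, (1 + ε) ^ ζ * (a ζ b : ℝ) ≤ r b + 3 * ε * w b) := by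
  have hsize (ζ : ℤ) : 0 < (1 + ε) ^ ζ := zpow_pos (by linarith) ζ
  have h0 (b : Fin M) : 0 ≤ r b + 2 * ε * w b := by have := hw b; have := hr b; positivity
  have hu : Antitone fun b => ε ^ γ * w b := fun _ _ h =>
    mul_le_mul_of_nonneg_left (hsorted h) (Real.rpow_nonneg hε.le γ)
  have hfit (ζ : ℤ) (k : ℕ) (hk : k < ntil ζ) :=
    (jobStart_add_le_sum hsize hk).trans (hcap ζ)
  have hadm (ζ : ℤ) (b : Fin M) := lt_of_nextFitCount_ne_zero (ζ := ζ) (b := b) h0 hsize hu hfit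
  have hεγ : ε ^ γ ≤ ε := by
    simpa using Real.rpow_le_rpow_of_exponent_ge hε (by linarith) (by linarith : (1 : ℝ) ≤ γ)
  refine ⟨nextFitCount _ _ ntil, sum_nextFitCount h0 hsize hfit, hadm, fun b => ?_⟩
  calc _ ≤ r b + 2 * ε * w b + ε * w b :=
        sum_mul_nextFitCount_le (slack := fun b => ε * w b) h0 hsize (mul_nonneg hε.le (hw b))
          fun ζ h => (hadm ζ b h).le.trans (mul_le_mul_of_nonneg_right hεγ (hw b))
    _ = r b + 3 * ε * w b := by ring
end
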